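/- An ℓ-partition λ cannot have simultaneously one normal i-box and two conormal i-boxes of the same residue i. -/

import Mathlib

/-- The hook length of the box `(a, b)` (0-indexed row `a`, column `b`)
of the Young diagram `μ`: the number of boxes to the right in its row,
plus the number of boxes below in its column, plus one. -/
def hookLen (μ : YoungDiagram) (a b : ℕ) : ℕ :=
  μ.rowLen a + μ.colLen b - a - b - 1

/-- A partition (Young diagram) is an `ℓ`-core when no box has hook length
divisible by `ℓ`. -/
def IsCore (ℓ : ℕ) (μ : YoungDiagram) : Prop :=
  ∀ a b : ℕ, (a, b) ∈ μ → ¬ ℓ ∣ hookLen μ a b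

/-- Two cells are adjacent if they share an edge. -/
def AdjCell (p q : ℕ × ℕ) : Prop :=
  (p.1 = q.1 ∧ (p.2 = q.2 + 1 ∨ q.2 = p.2 + 1)) ∨
  (p.2 = q.2 ∧ (p.1 = q.1 + 1 ∨ q.1 = p.1 + 1))

/-- A finite set of cells is connected if any two of its cells are joined by a
path of edge-adjacent cells inside the set. -/
def ConnectedCells (s : Finset (ℕ × ℕ)) : Prop :=
  ∀ p ∈ s, ∀ q ∈ s,
    Relation.ReflTransGen (fun x y => x ∈ s ∧ y ∈ s ∧ AdjCell x y) p q

/-- A set of cells contains no 2×2 square. -/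
def No2x2 (s : Finset (ℕ × ℕ)) : Prop :=
  ¬ ∃ a b : ℕ, (a, b) ∈ s ∧ (a + 1, b) ∈ s ∧ (a, b + 1) ∈ s ∧ (a + 1, b + 1) ∈ s

/-- `s` is a removable `ℓ`-rim hook of the Young diagram `lam`: a connected set of
`ℓ` cells of `lam`, containing no 2×2 square, whose removal from `lam` leaves the
Young diagram of a partition. -/
def IsRemovableRimHook (ℓ : ℕ) (lam : YoungDiagram) (s : Finset (ℕ × ℕ)) : Prop :=
  ∃ μ : YoungDiagram, μ.cells ⊆ lam.cells ∧ s = lam.cells \ μ.cells ∧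
    s.card = ℓ ∧ ConnectedCells s ∧ No2x2 s

/-- A set of cells all lying in a single row. -/
def HorizontalCells (s : Finset (ℕ × ℕ)) : Prop := ∀ p ∈ s, ∀ q ∈ s, p.1 = q.1

/-- A set of cells all lying in a single column. -/
def VerticalCells (s : Finset (ℕ × ℕ)) : Prop := ∀ p ∈ s, ∀ q ∈ s, p.2 = q.2

/-- Carter's condition (⋆): for all pairs of boxes in the same column of `lam`,
`ℓ` divides one hook length iff it divides the other. -/
def StarCond (ℓ : ℕ) (lam : YoungDiagram) : Prop :=
  ∀ a b c : ℕ, (a, c) ∈ lam → (b, c) ∈ lam →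
    (ℓ ∣ hookLen lam a c ↔ ℓ ∣ hookLen lam b c)

/-- `b` is obtained from `a` by removing a horizontal `ℓ`-rim hook;
equivalently `a` is obtained from `b` by adding a horizontal `ℓ`-rim hook. -/
def RemoveHorizHook (ℓ : ℕ) (a b : YoungDiagram) : Prop :=
  ∃ s, IsRemovableRimHook ℓ a s ∧ HorizontalCells s ∧ b.cells = a.cells \ s

/-- A partition is `ℓ`-regular if it has no `ℓ` equal nonzero parts. -/
def Regular (ℓ : ℕ) (lam : YoungDiagram) : Prop :=
  ∀ i : ℕ, lam.rowLen i = lam.rowLen (i + ℓ - 1) → lam.rowLen i = 0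

/-- An `ℓ`-partition: an `ℓ`-regular partition each of whose removable `ℓ`-rim hooks
is horizontal, and such that this remains true after removing any sequence of
horizontal `ℓ`-rim hooks. -/
def IsEllPartition (ℓ : ℕ) (lam : YoungDiagram) : Prop :=
  Regular ℓ lam ∧
  ∀ μ : YoungDiagram, Relation.ReflTransGen (RemoveHorizHook ℓ) lam μ →
    ∀ s, IsRemovableRimHook ℓ μ s → HorizontalCells s

/-- The residue of the position in row `a`, column `b` (0-indexed): `(b - a) mod ℓ`. -/
def resBox (ℓ : ℕ) (a b : ℕ) : ZMod ℓ := (b : ZMod ℓ) - (a : ZMod ℓ)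

/-- `(a,b)` is a removable box of `lam`: it is a box of `lam` whose removal
leaves a Young diagram. -/
def IsRemovableBox (lam : YoungDiagram) (a b : ℕ) : Prop :=
  (a, b) ∈ lam ∧ (a, b + 1) ∉ lam ∧ (a + 1, b) ∉ lam

/-- `(a,b)` is an addable box of `lam`: it is not a box of `lam` and adding it
yields a Young diagram. -/
def IsAddableBox (lam : YoungDiagram) (a b : ℕ) : Prop :=
  (a, b) ∉ lam ∧ (b = 0 ∨ (a, b - 1) ∈ lam) ∧ (a = 0 ∨ (a - 1, b) ∈ lam)

/-- Row `a` contains a removable `i`-box of `lam`. -/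
def RemRow (ℓ : ℕ) (lam : YoungDiagram) (i : ZMod ℓ) (a : ℕ) : Prop :=
  ∃ b, IsRemovableBox lam a b ∧ resBox ℓ a b = i

/-- Row `a` contains an addable `i`-box of `lam`. -/
def AddRow (ℓ : ℕ) (lam : YoungDiagram) (i : ZMod ℓ) (a : ℕ) : Prop :=
  ∃ b, IsAddableBox lam a b ∧ resBox ℓ a b = i

/-- `(a, b)` is a normal `i`-box of `lam`: a removable `i`-box whose `−` sign is not
canceled in the reduced `i`-signature (reading bottom-left to top-right); i.e. every
segment of rows strictly below row ... strictly between contains at least as many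
removable `i`-boxes as addable `i`-boxes. -/
def NormalBox (ℓ : ℕ) (lam : YoungDiagram) (i : ZMod ℓ) (a b : ℕ) : Prop :=
  IsRemovableBox lam a b ∧ resBox ℓ a b = i ∧
  ∀ c < a, {r : ℕ | c ≤ r ∧ r < a ∧ AddRow ℓ lam i r}.ncard ≤
           {r : ℕ | c ≤ r ∧ r < a ∧ RemRow ℓ lam i r}.ncard

/-- `(a, b)` is a conormal `i`-box of `lam`: an addable `i`-box whose `+` sign is not
canceled in the reduced `i`-signature. -/
def ConormalBox (ℓ : ℕ) (lam : YoungDiagram) (i : ZMod ℓ) (a b : ℕ) : Prop :=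
  IsAddableBox lam a b ∧ resBox ℓ a b = i ∧
  ∀ c, a < c → {r : ℕ | a < r ∧ r ≤ c ∧ RemRow ℓ lam i r}.ncard ≤
               {r : ℕ | a < r ∧ r ≤ c ∧ AddRow ℓ lam i r}.ncard

/-!
Place `lam` on an abacus with `N` beads at the positions `rowLen y + N - 1 - y`. Removing
a rim hook of length `ℓ` slides a bead `ℓ` positions down into a gap, and the hook is
horizontal exactly when the slide jumps over no bead. So for an `ℓ`-partition no slide
ever jumps over a bead, in `lam` or in anything reached from it by such slides.

Comparing the signature counts, the normal `i`-box lies in a row above both conormal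
`i`-boxes. The lower conormal box gives a gap `g ≡ i + N` lying below the bead of the
normal row (`≡ i + N`) and the bead of the other conormal row (`≡ i + N - 1`). Sliding
the lowest beads above `g` down, one sees that such a configuration cannot exist: above a
gap with a bead of its own residue above it, every bead has the gap's residue.
-/

open Relation Finset

theorem AdjCell.symm {p q : ℕ × ℕ} (h : AdjCell p q) : AdjCell q p := by
  unfold AdjCell at *
  omega

def AdjIn (s : Finset (ℕ × ℕ)) (p q : ℕ × ℕ) : Prop :=
  p ∈ s ∧ q ∈ s ∧ AdjCell p q

instance (s : Finset (ℕ × ℕ)) : Std.Symm (AdjIn s) :=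
  ⟨fun _ _ ⟨hp, hq, h⟩ => ⟨hq, hp, h.symm⟩⟩

theorem connectedCells_of_forall_reflTransGen {s : Finset (ℕ × ℕ)} {p₀ : ℕ × ℕ}
    (h : ∀ p ∈ s, ReflTransGen (AdjIn s) p p₀) : ConnectedCells s :=
  fun p hp q hq => (h p hp).trans (Std.Symm.symm _ _ (h q hq))

theorem AdjIn.mono {s t : Finset (ℕ × ℕ)} (hst : s ⊆ t) : AdjIn s ≤ AdjIn t :=
  fun _ _ ⟨hp, hq, h⟩ => ⟨hst hp, hst hq, h⟩

theorem ConnectedCells.union {s t : Finset (ℕ × ℕ)} (hs : ConnectedCells s)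
    (ht : ConnectedCells t) {p q : ℕ × ℕ} (hp : p ∈ s) (hq : q ∈ t) (hpq : AdjCell p q) :
    ConnectedCells (s ∪ t) := by
  refine connectedCells_of_forall_reflTransGen (p₀ := p) fun u hu => ?_
  rcases mem_union.mp hu with hu | hu
  · exact ReflTransGen.mono (AdjIn.mono subset_union_left) _ _ (hs u hu p hp)
  · exact (ReflTransGen.mono (AdjIn.mono subset_union_right) _ _ (ht u hu q hq)).tail
      ⟨mem_union_right _ hq, mem_union_left _ hp, hpq.symm⟩

theorem connectedCells_singleton_product_Ico (r a b : ℕ) :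
    ConnectedCells ({r} ×ˢ Ico a b) := by
  refine connectedCells_of_forall_reflTransGen (p₀ := (r, a)) fun ⟨r', y⟩ hy => ?_
  simp only [mem_product, mem_singleton, mem_Ico] at hy
  obtain ⟨rfl, hay, hyb⟩ := hy
  induction y, hay using Nat.le_induction with
  | base => exact .refl
  | succ y hay ih =>
    exact .head (b := (r', y)) ⟨by simp; omega, by simp; omega, Or.inl ⟨rfl, Or.inl rfl⟩⟩
      (ih (by omega))

namespace YoungDiagram

variable {lam : YoungDiagram} {N : ℕ}

theorem rowLen_eq_of_forall_mem_iff {r m : ℕ} (h : ∀ y, (r, y) ∈ lam ↔ y < m) :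
    lam.rowLen r = m :=
  eq_of_forall_lt_iff fun y => mem_iff_lt_rowLen.symm.trans (h y)

theorem colLen_le_of_le {μ : YoungDiagram} (h : μ ≤ lam) (c : ℕ) :
    μ.colLen c ≤ lam.colLen c := by
  by_contra! hc
  exact (lt_irrefl _) (mem_iff_lt_colLen.mp (h (mem_iff_lt_colLen.mpr hc)))

def rimHook (lam : YoungDiagram) (x c : ℕ) : Finset (ℕ × ℕ) :=
  lam.cells.filter fun p => x ≤ p.1 ∧ c ≤ p.2 ∧ (p.1 + 1, p.2 + 1) ∉ lam

def removeRimHook (lam : YoungDiagram) (x c : ℕ) : YoungDiagram where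
  cells := lam.cells.filter fun p => p.1 < x ∨ p.2 < c ∨ (p.1 + 1, p.2 + 1) ∈ lam
  isLowerSet := by
    rintro ⟨r, y⟩ ⟨r', y'⟩ ⟨hr, hy⟩ hq
    simp only [coe_filter, mem_cells, Set.mem_ofPred_eq] at hq ⊢
    refine ⟨lam.isLowerSet ⟨hr, hy⟩ hq.1, ?_⟩
    rcases hq.2 with h | h | h
    · exact Or.inl (by omega)
    · exact Or.inr (Or.inl (by omega))
    · exact Or.inr (Or.inr (lam.isLowerSet ⟨Nat.add_le_add_right hr 1,
        Nat.add_le_add_right hy 1⟩ h))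

theorem mem_rimHook {x c r y : ℕ} : (r, y) ∈ lam.rimHook x c ↔
    (r, y) ∈ lam ∧ x ≤ r ∧ c ≤ y ∧ (r + 1, y + 1) ∉ lam := by
  simp [rimHook]

theorem cells_sdiff_removeRimHook (x c : ℕ) :
    lam.cells \ (lam.removeRimHook x c).cells = lam.rimHook x c := by
  ext ⟨r, y⟩
  simp only [removeRimHook, rimHook, mem_sdiff, mem_filter, mem_cells, not_and, not_or, not_lt]
  tauto

theorem removeRimHook_le (x c : ℕ) : lam.removeRimHook x c ≤ lam :=
  cells_subset_iff.mp (filter_subset _ _)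

theorem cells_removeRimHook (x c : ℕ) :
    (lam.removeRimHook x c).cells = lam.cells \ lam.rimHook x c := by
  rw [← cells_sdiff_removeRimHook, Finset.sdiff_sdiff_eq_self]
  exact cells_subset_iff.mpr (removeRimHook_le x c)

theorem rimHook_succ_subset (x c : ℕ) : lam.rimHook (x + 1) c ⊆ lam.rimHook x c :=
  fun _ h => by
    simp only [rimHook, mem_filter] at h ⊢
    exact ⟨h.1, by omega, h.2.2⟩

theorem no2x2_rimHook (x c : ℕ) : No2x2 (lam.rimHook x c) := by
  rintro ⟨a, b, hab, -, -, hab'⟩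
  exact (mem_rimHook.mp hab).2.2.2 (mem_rimHook.mp hab').1

theorem mem_rimHook_rowLen_sub_one {x c : ℕ} (h : (x, c) ∈ lam) :
    (x, lam.rowLen x - 1) ∈ lam.rimHook x c := by
  have := mem_iff_lt_rowLen.mp h
  have := lam.rowLen_anti x (x + 1) (by omega)
  simp only [mem_rimHook, mem_iff_lt_rowLen]
  omega

theorem rimHook_of_notMem {x c : ℕ} (h : (x + 1, c) ∉ lam) :
    lam.rimHook x c = {x} ×ˢ Ico c (lam.rowLen x) := by
  ext ⟨r, y⟩
  simp only [mem_rimHook, mem_product, mem_singleton, mem_Ico, mem_iff_lt_rowLen] at h ⊢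
  constructor
  · rintro ⟨hy, hxr, hcy, -⟩
    have : r = x := by
      by_contra hr
      have := lam.rowLen_anti (x + 1) r (by omega)
      omega
    subst this
    omega
  · rintro ⟨rfl, hcy, hy⟩
    omega

theorem rimHook_of_mem {x c : ℕ} (h : (x + 1, c) ∈ lam) :
    lam.rimHook x c = {x} ×ˢ Ico (lam.rowLen (x + 1) - 1) (lam.rowLen x) ∪
      lam.rimHook (x + 1) c := by
  ext ⟨r, y⟩
  simp only [mem_union, mem_rimHook, mem_product, mem_singleton, mem_Ico,
    mem_iff_lt_rowLen] at h ⊢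
  rcases lt_trichotomy r x with hr | rfl | hr
  · omega
  · have := lam.rowLen_anti r (r + 1) (by omega)
    omega
  · omega

theorem card_rimHook {x c : ℕ} (h : (x, c) ∈ lam) : #(lam.rimHook x c) = hookLen lam x c := by
  have hc := mem_iff_lt_rowLen.mp h
  unfold hookLen
  by_cases hx : (x + 1, c) ∈ lam
  · have ih := card_rimHook hx
    have hdisj : Disjoint ({x} ×ˢ Ico (lam.rowLen (x + 1) - 1) (lam.rowLen x))
        (lam.rimHook (x + 1) c) := by
      refine disjoint_left.mpr fun ⟨r, y⟩ hl hr => ?_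
      simp only [mem_product, mem_singleton] at hl
      have := (mem_rimHook.mp hr).2.1
      omega
    rw [rimHook_of_mem hx, card_union_of_disjoint hdisj, card_product, card_singleton,
      Nat.card_Ico, ih, hookLen]
    have := mem_iff_lt_rowLen.mp hx
    have := mem_iff_lt_colLen.mp hx
    have := lam.rowLen_anti x (x + 1) (by omega)
    omega
  · rw [rimHook_of_notMem hx, card_product, card_singleton, Nat.card_Ico]
    have := mem_iff_lt_colLen.mp h
    have := mt mem_iff_lt_colLen.mpr hx
    omega
termination_by lam.colLen c - x
decreasing_by have := mem_iff_lt_colLen.mp hx; omega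

theorem connectedCells_rimHook (x c : ℕ) :
    ConnectedCells (lam.rimHook x c) := by
  by_cases hx : (x + 1, c) ∈ lam
  · rw [rimHook_of_mem hx]
    have := mem_iff_lt_rowLen.mp hx
    have := lam.rowLen_anti x (x + 1) (by omega)
    refine (connectedCells_singleton_product_Ico _ _ _).union (connectedCells_rimHook (x + 1) c)
      (p := (x, lam.rowLen (x + 1) - 1)) (by simp; omega)
      (mem_rimHook_rowLen_sub_one hx) (Or.inr ⟨rfl, Or.inr rfl⟩)
  · rw [rimHook_of_notMem hx]
    exact connectedCells_singleton_product_Ico _ _ _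
termination_by lam.colLen c - x
decreasing_by have := mem_iff_lt_colLen.mp hx; omega

theorem isRemovableRimHook_rimHook {x c : ℕ} (h : (x, c) ∈ lam) :
    IsRemovableRimHook (hookLen lam x c) lam (lam.rimHook x c) :=
  ⟨lam.removeRimHook x c, cells_subset_iff.mpr (removeRimHook_le x c),
    (cells_sdiff_removeRimHook x c).symm, card_rimHook h, connectedCells_rimHook x c,
    no2x2_rimHook x c⟩

theorem horizontalCells_rimHook_iff {x c : ℕ} (h : (x, c) ∈ lam) :
    HorizontalCells (lam.rimHook x c) ↔ (x + 1, c) ∉ lam := by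
  refine ⟨fun hH hx => ?_, fun hx => ?_⟩
  · have := hH _ (mem_rimHook_rowLen_sub_one h) _
      (rimHook_succ_subset x c (mem_rimHook_rowLen_sub_one hx))
    omega
  · rw [rimHook_of_notMem hx]
    intro p hp q hq
    simp only [mem_product, mem_singleton] at hp hq
    rw [hp.1, hq.1]

theorem rowLen_removeRimHook {x c : ℕ} (h : (x, c) ∈ lam) (hx : (x + 1, c) ∉ lam) (r : ℕ) :
    (lam.removeRimHook x c).rowLen r = if r = x then c else lam.rowLen r := by
  refine rowLen_eq_of_forall_mem_iff fun y => ?_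
  rw [← mem_cells, cells_removeRimHook, rimHook_of_notMem hx]
  simp only [mem_sdiff, mem_cells, mem_product, mem_singleton, mem_Ico, mem_iff_lt_rowLen]
  have := mem_iff_lt_rowLen.mp h
  split_ifs with hr
  · subst hr
    omega
  · omega

/-- The first-column hook length of row `y` when `lam` is viewed with `N` rows
(the `y`-th bead of an `N`-bead abacus). -/
def betaNum (lam : YoungDiagram) (N y : ℕ) : ℕ :=
  lam.rowLen y + (N - 1 - y)

def betaSet (lam : YoungDiagram) (N : ℕ) : Finset ℕ :=
  (range N).image (lam.betaNum N)

theorem mem_betaSet {u : ℕ} : u ∈ lam.betaSet N ↔ ∃ y < N, lam.betaNum N y = u := by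
  simp [betaSet]

theorem betaNum_strictAntiOn (lam : YoungDiagram) (N : ℕ) :
    StrictAntiOn (lam.betaNum N) (Set.Iio N) := by
  intro y hy y' hy' hyy'
  have := lam.rowLen_anti y y' hyy'.le
  simp only [Set.mem_Iio] at hy hy'
  unfold betaNum
  omega

theorem exists_betaNum_threshold {j : ℕ} :
    ∃ m ≤ N, ∀ y < N, (j < lam.betaNum N y ↔ y < m) := by
  classical
  have hP : ∃ y, N ≤ y ∨ lam.betaNum N y ≤ j := ⟨N, Or.inl le_rfl⟩
  refine ⟨Nat.find hP, Nat.find_min' hP (Or.inl le_rfl),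
    fun y hy => ⟨fun h => ?_, fun h => ?_⟩⟩
  · by_contra! hm
    have hmN : Nat.find hP < N := hm.trans_lt hy
    have := (Nat.find_spec hP).resolve_left (not_le.mpr hmN)
    have := (lam.betaNum_strictAntiOn N).antitoneOn hmN hy hm
    omega
  · have := Nat.find_min hP h
    omega

theorem exists_column_of_notMem_betaSet (hN : lam.colLen 0 ≤ N) {x j : ℕ} (hx : x < N)
    (hj : j ∉ lam.betaSet N) (hjx : j < lam.betaNum N x) :
    ∃ m ≤ N, N ≤ j + m ∧ (∀ y < N, j < lam.betaNum N y ↔ y < m) ∧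
      ∀ y, (y, j + m - N) ∈ lam ↔ y < m := by
  obtain ⟨m, hmN, hm⟩ := lam.exists_betaNum_threshold (N := N) (j := j)
  have hxm : x < m := (hm x hx).mp hjx
  have hbelow : m < N → lam.betaNum N m < j := fun h =>
    lt_of_le_of_ne (not_lt.mp fun h' => lt_irrefl m ((hm m h).mp h'))
      fun he => hj (mem_betaSet.mpr ⟨m, h, he⟩)
  have hlast : j < lam.betaNum N (m - 1) := (hm _ (by omega)).mpr (by omega)
  unfold betaNum at hbelow hlast
  have hjm : N ≤ j + m := by
    rcases hmN.lt_or_eq with h | h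
    · have := hbelow h
      omega
    · omega
  refine ⟨m, hmN, hjm, hm, fun y => ?_⟩
  rw [mem_iff_lt_rowLen]
  constructor
  · intro hy
    by_contra! hmy
    rcases hmN.lt_or_eq with h | rfl
    · have := hbelow h
      have := lam.rowLen_anti m y hmy
      omega
    · have := mem_iff_lt_colLen.mp (lam.up_left_mem le_rfl (Nat.zero_le _)
        (mem_iff_lt_rowLen.mpr hy))
      omega
  · intro hy
    have := lam.rowLen_anti y (m - 1) (by omega)
    omega

theorem exists_hook_of_notMem_betaSet (hN : lam.colLen 0 ≤ N) {x j : ℕ} (hx : x < N)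
    (hj : j ∉ lam.betaSet N) (hjx : j < lam.betaNum N x) :
    ∃ c, (x, c) ∈ lam ∧ hookLen lam x c = lam.betaNum N x - j ∧
      ((x + 1, c) ∈ lam ↔ ∃ u ∈ lam.betaSet N, j < u ∧ u < lam.betaNum N x) := by
  obtain ⟨m, hmN, hjm, hm, hcol⟩ := exists_column_of_notMem_betaSet hN hx hj hjx
  have hcolLen : lam.colLen (j + m - N) = m :=
    eq_of_forall_lt_iff fun y => mem_iff_lt_colLen.symm.trans (hcol y)
  have hxm : x < m := (hm x hx).mp hjx
  refine ⟨j + m - N, (hcol x).mpr hxm, ?_, ?_⟩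
  · unfold hookLen betaNum
    rw [hcolLen]
    omega
  · rw [hcol]
    constructor
    · intro h
      exact ⟨_, mem_betaSet.mpr ⟨x + 1, by omega, rfl⟩, (hm _ (by omega)).mpr h,
        lam.betaNum_strictAntiOn N hx (show x + 1 < N by omega) (Nat.lt_succ_self x)⟩
    · rintro ⟨u, hu, hju, hux⟩
      obtain ⟨y, hy, rfl⟩ := mem_betaSet.mp hu
      have := (lam.betaNum_strictAntiOn N).lt_iff_gt hy hx |>.mp hux
      have := (hm y hy).mp hju
      omega

theorem natCast_betaNum {ℓ y : ℕ} (hy : y < N) :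
    (lam.betaNum N y : ZMod ℓ) = lam.rowLen y + N - (y + 1) := by
  rw [betaNum, Nat.sub_sub, Nat.cast_add, Nat.cast_sub (by omega)]
  push_cast
  ring

theorem betaSet_removeRimHook {x c : ℕ} (h : (x, c) ∈ lam) (hx : (x + 1, c) ∉ lam)
    (hxN : x < N) :
    (lam.removeRimHook x c).betaSet N =
      insert (lam.betaNum N x - hookLen lam x c) ((lam.betaSet N).erase (lam.betaNum N x)) := by
  have hcol : lam.colLen c = x + 1 :=
    le_antisymm (not_lt.mp (mt mem_iff_lt_colLen.mpr hx)) (mem_iff_lt_colLen.mp h)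
  have hc := mem_iff_lt_rowLen.mp h
  have hbeta : ∀ y, (lam.removeRimHook x c).betaNum N y =
      if y = x then lam.betaNum N x - hookLen lam x c else lam.betaNum N y := by
    intro y
    unfold betaNum hookLen
    rw [rowLen_removeRimHook h hx, hcol]
    split_ifs with hy
    · subst hy
      omega
    · rfl
  have hinj := (lam.betaNum_strictAntiOn N).injOn
  ext u
  simp only [mem_insert, mem_erase, mem_betaSet, hbeta]
  constructor
  · rintro ⟨y, hy, rfl⟩
    split_ifs with hyx
    · exact Or.inl rfl
    · exact Or.inr ⟨fun he => hyx (hinj hy hxN he), y, hy, rfl⟩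
  · rintro (rfl | ⟨hne, y, hy, rfl⟩)
    · exact ⟨x, hxN, if_pos rfl⟩
    · exact ⟨y, hy, if_neg fun hyx => hne (by rw [hyx])⟩

end YoungDiagram

/-- `C` is a family of abacus configurations (bead sets) in which sliding a bead `ℓ`
positions down into a gap never jumps over another bead and stays inside `C`. -/
def HorizSlideClosed (ℓ : ℕ) (C : Finset ℕ → Prop) : Prop :=
  ∀ B, C B → ∀ z ∈ B, ∀ j ∉ B, j + ℓ = z →
    (∀ u ∈ B, j < u → z ≤ u) ∧ C (insert j (B.erase z))

theorem natCast_sub_self_eq {ℓ v : ℕ} (h : ℓ ≤ v) : ((v - ℓ : ℕ) : ZMod ℓ) = v := by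
  simp [Nat.cast_sub h]

theorem sum_insert_erase_lt {B : Finset ℕ} {j z : ℕ} (hj : j ∉ B) (hz : z ∈ B)
    (hjz : j < z) :
    ∑ u ∈ insert j (B.erase z), u < ∑ u ∈ B, u := by
  rw [sum_insert fun h => hj (mem_of_mem_erase h), ← add_sum_erase B (fun u => u) hz]
  omega

theorem sub_notMem_of_forall_le {ℓ g w : ℕ} {B : Finset ℕ} (hℓ : 0 < ℓ) (hg : g ∉ B)
    (hgw : g + ℓ ≤ w) (hmin : ∀ u ∈ B, g < u → (u : ZMod ℓ) = w → w ≤ u) :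
    w - ℓ ∉ B := by
  intro hj
  rcases (show g ≤ w - ℓ by omega).lt_or_eq with h | h
  · have := hmin _ hj h (natCast_sub_self_eq (by omega))
    omega
  · exact hg (h ▸ hj)

/-- Slides only move beads down, so one can induct on the sum of the bead positions. If
the lowest bead `v ≡ g` above the gap `g` can slide to a gap above `g`, slide it; otherwise
it sits exactly at `g + ℓ`, nothing lies in between, and the lowest bead `w ≢ g` above `g`
lies above `v` and slides to a gap above `v`. Either way the hypotheses survive the slide. -/
theorem HorizSlideClosed.natCast_eq_of_lt {ℓ : ℕ} {C : Finset ℕ → Prop}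
    (hC : HorizSlideClosed ℓ C) (hℓ : 0 < ℓ) {B : Finset ℕ} (hB : C B) {g p q : ℕ}
    (hg : g ∉ B) (hp : p ∈ B) (hgp : g < p) (hpg : (p : ZMod ℓ) = g) (hq : q ∈ B)
    (hgq : g < q) : (q : ZMod ℓ) = g := by
  induction hs : ∑ u ∈ B, u using Nat.strong_induction_on generalizing B p q with
  | _ s ih =>
  by_contra hqg
  obtain ⟨v, hv, hvmin⟩ := (B.filter fun u => g < u ∧ (u : ZMod ℓ) = g).exists_min_image id
    ⟨p, mem_filter.mpr ⟨hp, hgp, hpg⟩⟩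
  obtain ⟨hvB, hgv, hvg⟩ := mem_filter.mp hv
  have hgv' := ((ZMod.natCast_eq_natCast_iff _ _ _).mp hvg).symm.add_le_of_lt hgv
  have hjB : v - ℓ ∉ B := sub_notMem_of_forall_le hℓ hg hgv' fun u hu hgu hu' =>
    hvmin u (mem_filter.mpr ⟨hu, hgu, hu'.trans hvg⟩)
  obtain ⟨hjump, hC'⟩ := hC B hB v hvB (v - ℓ) hjB (by omega)
  rcases (show g ≤ v - ℓ by omega).lt_or_eq with hgj | hgj
  · refine hqg (ih _ (hs ▸ sum_insert_erase_lt hjB hvB (by omega)) hC' (by simp [hg, hgj.ne])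
      (mem_insert_self _ _) hgj ((natCast_sub_self_eq (by omega)).trans hvg)
      (mem_insert_of_mem (mem_erase.mpr ⟨fun h => hqg (h ▸ hvg), hq⟩)) hgq rfl)
  · obtain ⟨w, hw, hwmin⟩ :=
      (B.filter fun u => g < u ∧ (u : ZMod ℓ) ≠ g).exists_min_image id
        ⟨q, mem_filter.mpr ⟨hq, hgq, hqg⟩⟩
    obtain ⟨hwB, hgw, hwg⟩ := mem_filter.mp hw
    have hvw : v < w := (hjump w hwB (by omega)).lt_of_ne fun h => hwg (h ▸ hvg)
    have hj'B : w - ℓ ∉ B := sub_notMem_of_forall_le hℓ hg (by omega) fun u hu hgu hu' =>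
      hwmin u (mem_filter.mpr ⟨hu, hgu, hu'.trans_ne hwg⟩)
    obtain ⟨hjump', hC''⟩ := hC B hB w hwB (w - ℓ) hj'B (by omega)
    have hvj : v < w - ℓ := by
      by_contra! h
      have := hjump' v hvB (h.lt_of_ne fun he => hj'B (he ▸ hvB))
      omega
    exact hwg ((natCast_sub_self_eq (by omega)).symm.trans
      (ih _ (hs ▸ sum_insert_erase_lt hj'B hwB (by omega)) hC'' (by simp [hg]; omega)
        (mem_insert_of_mem (mem_erase.mpr ⟨hvw.ne, hvB⟩)) hgv hvg (mem_insert_self _ _)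
        (by omega) rfl))

namespace YoungDiagram

theorem horizSlideClosed_betaSet {ℓ : ℕ} {lam : YoungDiagram}
    (hH : ∀ μ, ReflTransGen (RemoveHorizHook ℓ) lam μ →
      ∀ s, IsRemovableRimHook ℓ μ s → HorizontalCells s) (N : ℕ) :
    HorizSlideClosed ℓ fun B =>
      ∃ μ, ReflTransGen (RemoveHorizHook ℓ) lam μ ∧ μ.colLen 0 ≤ N ∧
        μ.betaSet N = B := by
  rintro B ⟨μ, hμ, hN, rfl⟩ z hz j hj hjz
  obtain ⟨x, hx, rfl⟩ := mem_betaSet.mp hz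
  obtain ⟨c, hxc, hhook, hbetween⟩ := exists_hook_of_notMem_betaSet hN hx hj
    ((Nat.le.intro hjz).lt_of_ne fun h => hj (h ▸ hz))
  have hrim : IsRemovableRimHook ℓ μ (μ.rimHook x c) := by
    simpa [hhook, ← hjz] using isRemovableRimHook_rimHook hxc
  have hx1 : (x + 1, c) ∉ μ := (horizontalCells_rimHook_iff hxc).mp (hH μ hμ _ hrim)
  refine ⟨fun u hu hju => not_lt.mp fun hux => hx1 (hbetween.mpr ⟨u, hu, hju, hux⟩),
    μ.removeRimHook x c,
    hμ.tail ⟨_, hrim, (horizontalCells_rimHook_iff hxc).mpr hx1, cells_removeRimHook x c⟩,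
    (colLen_le_of_le (removeRimHook_le x c) 0).trans hN, ?_⟩
  rw [betaSet_removeRimHook hxc hx1 hx, hhook, ← hjz, Nat.add_sub_cancel_left,
    Nat.add_sub_cancel]

end YoungDiagram

section Boxes

variable {ℓ : ℕ} {lam : YoungDiagram} {i : ZMod ℓ} {a b N : ℕ}

open YoungDiagram

theorem IsAddableBox.eq_rowLen (h : IsAddableBox lam a b) : b = lam.rowLen a := by
  obtain ⟨h1, h2 | h2, -⟩ := h <;> rw [mem_iff_lt_rowLen] at * <;> omega

theorem IsRemovableBox.add_one_eq_rowLen (h : IsRemovableBox lam a b) : b + 1 = lam.rowLen a := by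
  obtain ⟨h1, h2, -⟩ := h
  rw [mem_iff_lt_rowLen] at h1 h2
  omega

theorem not_remRow_and_addRow [Nontrivial (ZMod ℓ)] :
    ¬ (RemRow ℓ lam i a ∧ AddRow ℓ lam i a) := by
  rintro ⟨⟨b, hrem, rfl⟩, ⟨b', hadd, hres⟩⟩
  have hb' : b' = b + 1 := by rw [hadd.eq_rowLen, ← hrem.add_one_eq_rowLen]
  subst hb'
  simp only [resBox, Nat.cast_add, Nat.cast_one, add_sub_right_comm, add_eq_left] at hres
  exact one_ne_zero hres

theorem ncard_setOf_Ico (P : ℕ → Prop) [DecidablePred P] (c a : ℕ) :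
    {r | c ≤ r ∧ r < a ∧ P r}.ncard = #((Ico c a).filter P) := by
  rw [← Set.ncard_coe_finset]
  congr
  ext
  simp [and_assoc]

theorem ncard_setOf_Ioc (P : ℕ → Prop) [DecidablePred P] (c a : ℕ) :
    {r | c < r ∧ r ≤ a ∧ P r}.ncard = #((Ioc c a).filter P) := by
  rw [← Set.ncard_coe_finset]
  congr
  ext
  simp [and_assoc]

/-- Between the rows `a' < a`, the normal condition at `a` asks for more `−` than `+`
signs and the conormal condition at `a'` for more `+` than `−` signs. -/
theorem NormalBox.lt_of_conormalBox [Nontrivial (ZMod ℓ)] {a' b' : ℕ}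
    (hn : NormalBox ℓ lam i a b) (hc : ConormalBox ℓ lam i a' b') : a < a' := by
  classical
  obtain ⟨hrem, hres, hcount⟩ := hn
  obtain ⟨hadd, hres', hcount'⟩ := hc
  have hrow : ∀ {r}, RemRow ℓ lam i r → ¬ AddRow ℓ lam i r := fun h h' =>
    not_remRow_and_addRow ⟨h, h'⟩
  by_contra! h
  rcases h.lt_or_eq with hlt | rfl
  · have h1 := hcount a' hlt
    have h2 := hcount' a hlt
    rw [ncard_setOf_Ico, ncard_setOf_Ico, ← Ioo_insert_left hlt, filter_insert, filter_insert,
      if_pos ⟨b', hadd, hres'⟩, if_neg fun h => hrow h ⟨b', hadd, hres'⟩,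
      card_insert_of_notMem (by simp)] at h1
    rw [ncard_setOf_Ioc, ncard_setOf_Ioc, ← Ioo_insert_right hlt, filter_insert, filter_insert,
      if_pos ⟨b, hrem, hres⟩, if_neg (hrow ⟨b, hrem, hres⟩),
      card_insert_of_notMem (by simp)] at h2
    omega
  · exact hrow ⟨b, hrem, hres⟩ ⟨b', hadd, hres'⟩

theorem IsRemovableBox.natCast_betaNum (h : IsRemovableBox lam a b) (ha : a < N) :
    (lam.betaNum N a : ZMod ℓ) = resBox ℓ a b + N := by
  rw [YoungDiagram.natCast_betaNum ha, ← h.add_one_eq_rowLen, resBox]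
  push_cast
  ring

theorem IsAddableBox.natCast_betaNum_add_one (h : IsAddableBox lam a b) (ha : a < N) :
    (lam.betaNum N a : ZMod ℓ) + 1 = resBox ℓ a b + N := by
  rw [YoungDiagram.natCast_betaNum ha, ← h.eq_rowLen, resBox]
  ring

theorem IsAddableBox.betaNum_add_one_notMem (h : IsAddableBox lam a b) (ha : a < N) :
    lam.betaNum N a + 1 ∉ lam.betaSet N := by
  intro hmem
  have hb := h.eq_rowLen
  obtain ⟨y, hy, hya⟩ := mem_betaSet.mp hmem
  have hanti := lam.betaNum_strictAntiOn N
  rcases lt_or_ge y a with hlt | hle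
  · obtain ⟨-, -, h0 | hup⟩ := h
    · omega
    · have hstep := mem_iff_lt_rowLen.mp hup
      have := hanti.antitoneOn hy (show a - 1 < N by omega) (show y ≤ a - 1 by omega)
      unfold betaNum at this hya
      omega
  · have := hanti.antitoneOn ha hy hle
    omega

end Boxes

section

open YoungDiagram

theorem IsEllPartition.false_of_normalBox_of_conormalBox_lt {ℓ : ℕ} (hℓ : 1 < ℓ)
    {lam : YoungDiagram} {i : ZMod ℓ} (h : IsEllPartition ℓ lam) {a b a₁ b₁ a₂ b₂ : ℕ}
    (hn : NormalBox ℓ lam i a b) (hc₁ : ConormalBox ℓ lam i a₁ b₁)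
    (hc₂ : ConormalBox ℓ lam i a₂ b₂) (h12 : a₁ < a₂) : False := by
  have : Fact (1 < ℓ) := ⟨hℓ⟩
  have ha₁ := hn.lt_of_conormalBox hc₁
  -- On the abacus with `N` beads, rows `a` and `a₁` carry beads of residues `i + N` and
  -- `i + N - 1`, and the addable box in row `a₂` is a gap of residue `i + N` below both.
  set N := a₂ + 1 + lam.colLen 0
  have hmem : ∀ y < N, lam.betaNum N y ∈ lam.betaSet N :=
    fun y hy => mem_betaSet.mpr ⟨y, hy, rfl⟩
  have hanti := lam.betaNum_strictAntiOn N
  have hgap := hc₂.1.betaNum_add_one_notMem (show a₂ < N by omega)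
  have hgp : lam.betaNum N a₂ + 1 < lam.betaNum N a :=
    lt_of_le_of_ne (hanti (show a < N by omega) (show a₂ < N by omega) (by omega))
      fun he => hgap (he ▸ hmem a (by omega))
  have hgq : lam.betaNum N a₂ + 1 < lam.betaNum N a₁ :=
    lt_of_le_of_ne (hanti (show a₁ < N by omega) (show a₂ < N by omega) h12)
      fun he => hgap (he ▸ hmem a₁ (by omega))
  have hp := hn.1.natCast_betaNum (ℓ := ℓ) (show a < N by omega)
  have hq := hc₁.1.natCast_betaNum_add_one (ℓ := ℓ) (show a₁ < N by omega)
  have hg := hc₂.1.natCast_betaNum_add_one (ℓ := ℓ) (show a₂ < N by omega)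
  rw [hn.2.1] at hp
  rw [hc₁.2.1] at hq
  rw [hc₂.2.1] at hg
  have key := (horizSlideClosed_betaSet h.2 N).natCast_eq_of_lt (by omega)
    ⟨lam, .refl, by omega, rfl⟩ hgap (hmem a (by omega)) hgp (by push_cast; rw [hp, hg])
    (hmem a₁ (by omega)) hgq
  push_cast at key
  exact one_ne_zero (by linear_combination hq - hg - key : (1 : ZMod ℓ) = 0)

end

/-- An `ℓ`-partition cannot have simultaneously one normal `i`-box and two distinct
conormal `i`-boxes of the same residue `i`. -/
theorem stmt_13 (ℓ : ℕ) (hℓ : 2 ≤ ℓ) (i : ZMod ℓ) (lam : YoungDiagram)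
    (h : IsEllPartition ℓ lam) :
    ¬ ∃ a b a₁ b₁ a₂ b₂ : ℕ, NormalBox ℓ lam i a b ∧
      ConormalBox ℓ lam i a₁ b₁ ∧ ConormalBox ℓ lam i a₂ b₂ ∧ (a₁, b₁) ≠ (a₂, b₂) := by
  rintro ⟨a, b, a₁, b₁, a₂, b₂, hn, hc₁, hc₂, hne⟩
  rcases lt_trichotomy a₁ a₂ with h12 | rfl | h21
  · exact h.false_of_normalBox_of_conormalBox_lt hℓ hn hc₁ hc₂ h12
  · exact hne (by rw [hc₁.1.eq_rowLen, hc₂.1.eq_rowLen])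
  · exact h.false_of_normalBox_of_conormalBox_lt hℓ hn hc₂ hc₁ h21
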